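/- Assume the trace class condition ∑_{n≥0}(|a_n - 1/2| + |b_n|) < ∞. Let ζ ∈ ℂ with 0 < |ζ| < 1, set z = (ζ + ζ⁻¹)/2 and √(z² - 1) := (ζ⁻¹ - ζ)/2. Let f = (f_n)_{n≥-1} be a solution of the Jacobi equation at z with f_n ζ^{-n} → 1, and suppose f_n ≠ 0 for all n ≥ n₀ - 1 for some n₀ ≥ 0. Define Θ_n = ∑_{m=n₀}^{n} (a_{m-1} f_{m-1} f_m)^{-1} and g_n = f_n Θ_n for n ≥ n₀ - 1. Then: (i) a_{n-1} g_{n-1} + b_n g_n + a_n g_{n+1} = z g_n for all n ≥ n₀; (ii) a_n (f_n g_{n+1} - f_{n+1} g_n) = 1 for all n ≥ n₀ - 1; (iii) ζ^n g_n → 1/√(z² - 1) as n → ∞. -/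

import Mathlib

open Filter Finset MeasureTheory

noncomputable section

/-- Extended coefficient sequence with `a₋₁ = 1/2`. -/
def aext (a : ℕ → ℝ) : ℤ → ℝ := fun k => if k < 0 then 1/2 else a k.toNat

/-- `u : ℤ → ℂ` (restricted to indices `n ≥ -1`) solves the Jacobi equation
`a_{n-1} u_{n-1} + b_n u_n + a_n u_{n+1} = z u_n` for all `n ≥ 0`, with `a_{-1} = 1/2`. -/
def IsJacobiSol (a b : ℕ → ℝ) (z : ℂ) (u : ℤ → ℂ) : Prop :=
  ∀ n : ℕ, (aext a ((n : ℤ) - 1) : ℂ) * u ((n : ℤ) - 1) + (b n : ℂ) * u (n : ℤ)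
      + (a n : ℂ) * u ((n : ℤ) + 1) = z * u (n : ℤ)

/-- The perturbation `V = H - H₀` applied to a sequence:
`(Vf)_m = (a_{m-1} - 1/2) f_{m-1} + b_m f_m + (a_m - 1/2) f_{m+1}` with `a_{-1} = 1/2`. -/
def jV (a b : ℕ → ℝ) (f : ℤ → ℂ) (m : ℕ) : ℂ :=
  ((aext a ((m : ℤ) - 1) - 1/2 : ℝ) : ℂ) * f ((m : ℤ) - 1) + (b m : ℂ) * f (m : ℤ)
    + ((a m - 1/2 : ℝ) : ℂ) * f ((m : ℤ) + 1)

/-!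
The increments of `Θ` are `(a_{n-1} f_{n-1} f_n)⁻¹`, so the Wronskian of `f` and `g = f Θ` is
identically `1`; a sequence whose Wronskian with a nowhere vanishing solution is constant solves
the same recurrence. For the asymptotics, `S_n = ζ^{2n} Θ_n` satisfies
`S_{n+1} = ζ² S_n + ζ^{2n+2} (a_n f_n f_{n+1})⁻¹`, where the inhomogeneity tends to `2ζ` because
`f_n ~ ζ^n` and `a_n → 1/2`. As `|ζ²| < 1`, `S_n → 2ζ / (1 - ζ²) = 1 / √(z² - 1)`, and
`ζ^n g_n = (ζ^{-n} f_n) S_n`.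
-/

open Topology

section LinearRecurrence

variable {𝕜 : Type*} [NormedField 𝕜] [CompleteSpace 𝕜] {q : 𝕜}

theorem tendsto_sum_range_pow_mul_sub (hq : ‖q‖ < 1) {c : ℕ → 𝕜} {L : 𝕜}
    (hc : Tendsto c atTop (𝓝 L)) :
    Tendsto (fun n ↦ ∑ k ∈ range (n + 1), q ^ k * c (n - k)) atTop (𝓝 ((1 - q)⁻¹ * L)) := by
  obtain ⟨M, hM⟩ := hc.norm.bddAbove_range
  set F : ℕ → ℕ → 𝕜 := fun n k ↦ if k ≤ n then q ^ k * c (n - k) else 0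
  have hF (n : ℕ) : ∑ k ∈ range (n + 1), q ^ k * c (n - k) = ∑' k, F n k := by
    rw [tsum_eq_sum (s := range (n + 1)) fun k hk ↦ if_neg (by simpa using hk)]
    exact sum_congr rfl fun k hk ↦ (if_pos (Nat.lt_succ_iff.mp (mem_range.mp hk))).symm
  have hF_lim (k : ℕ) : Tendsto (F · k) atTop (𝓝 (q ^ k * L)) := by
    refine ((hc.comp (tendsto_sub_atTop_nat k)).const_mul _).congr' ?_
    filter_upwards [eventually_ge_atTop k] with n hn
    simp [F, hn]
  have hF_le (n k : ℕ) : ‖F n k‖ ≤ M * ‖q‖ ^ k := by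
    by_cases hk : k ≤ n
    · simpa [F, hk, mul_comm] using
        mul_le_mul_of_nonneg_right (hM (Set.mem_range_self (n - k))) (by positivity : 0 ≤ ‖q‖ ^ k)
    · simpa [F, hk] using mul_nonneg ((norm_nonneg _).trans (hM (Set.mem_range_self 0)))
        (by positivity : 0 ≤ ‖q‖ ^ k)
  have := tendsto_tsum_of_dominated_convergence
    ((summable_geometric_of_lt_one (norm_nonneg q) hq).mul_left M) hF_lim (.of_forall hF_le)
  rwa [tsum_mul_right, tsum_geometric_of_norm_lt_one hq, ← funext hF] at this

theorem tendsto_of_eventually_eq_mul_add (hq : ‖q‖ < 1) {S d : ℕ → 𝕜} {D : 𝕜}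
    (hd : Tendsto d atTop (𝓝 D)) (hS : ∀ᶠ n in atTop, S (n + 1) = q * S n + d n) :
    Tendsto S atTop (𝓝 ((1 - q)⁻¹ * D)) := by
  obtain ⟨N, hN⟩ := eventually_atTop.mp hS
  have hS_eq (n : ℕ) :
      S (n + 1 + N) = q ^ (n + 1) * S N + ∑ k ∈ range (n + 1), q ^ k * d (n - k + N) := by
    induction n with
    | zero => simp [hN N le_rfl, add_comm]
    | succ n ih =>
      rw [show n + 1 + 1 + N = n + 1 + N + 1 by ring, hN _ (by omega), ih,
        sum_range_succ' _ (n + 1)]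
      simp only [mul_add, mul_sum, pow_succ', mul_assoc, Nat.succ_sub_succ, Nat.sub_zero,
        pow_zero, one_mul]
      ring
  have hpow : Tendsto (fun n : ℕ ↦ q ^ (n + 1)) atTop (𝓝 0) :=
    (tendsto_pow_atTop_nhds_zero_of_norm_lt_one hq).comp (tendsto_add_atTop_nat 1)
  have hsum := tendsto_sum_range_pow_mul_sub hq (hd.comp (tendsto_add_atTop_nat N))
  have hlim : Tendsto (fun n ↦ S (n + 1 + N)) atTop (𝓝 (0 * S N + (1 - q)⁻¹ * D)) := by
    simp_rw [hS_eq]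
    exact (hpow.mul_const _).add hsum
  rw [zero_mul, zero_add] at hlim
  exact (tendsto_add_atTop_iff_nat (1 + N)).mp (by simpa [add_assoc] using hlim)

end LinearRecurrence

theorem mul_add_mul_add_mul_eq_of_wronskian {K : Type*} [CommRing K] [IsDomain K]
    {p q r z f₀ f₁ f₂ g₀ g₁ g₂ : K} (hf : p * f₀ + q * f₁ + r * f₂ = z * f₁)
    (hW : p * (f₀ * g₁ - f₁ * g₀) = r * (f₁ * g₂ - f₂ * g₁)) (hf₁ : f₁ ≠ 0) :
    p * g₀ + q * g₁ + r * g₂ = z * g₁ :=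
  mul_left_cancel₀ hf₁ (by linear_combination g₁ * hf - hW)

theorem aext_natCast (a : ℕ → ℝ) (n : ℕ) : aext a n = a n := by
  simp [aext]

theorem aext_pos {a : ℕ → ℝ} (ha : ∀ n, 0 < a n) (k : ℤ) : 0 < aext a k := by
  unfold aext
  split_ifs
  · norm_num
  · exact ha _

def thetaSum (a : ℕ → ℝ) (f : ℤ → ℂ) (n₀ : ℕ) (n : ℤ) : ℂ :=
  ∑ m ∈ Icc (n₀ : ℤ) n, ((aext a (m - 1) : ℂ) * f (m - 1) * f m)⁻¹

section thetaSum

variable {a : ℕ → ℝ} {f : ℤ → ℂ} {n₀ : ℕ}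

theorem thetaSum_add_one {n : ℤ} (hn : (n₀ : ℤ) - 1 ≤ n) :
    thetaSum a f n₀ (n + 1) = thetaSum a f n₀ n + ((aext a n : ℂ) * f n * f (n + 1))⁻¹ := by
  simp only [thetaSum, ← insert_Icc_right_eq_Icc_add_one (show (n₀ : ℤ) ≤ n + 1 by omega),
    sum_insert (show n + 1 ∉ Icc (n₀ : ℤ) n by simp), add_sub_cancel_right, add_comm]

theorem aext_mul_wronskian_thetaSum (ha : ∀ n, 0 < a n) {n : ℤ} (hn : (n₀ : ℤ) - 1 ≤ n)
    (hfn : f n ≠ 0) (hfn' : f (n + 1) ≠ 0) :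
    (aext a n : ℂ) * (f n * (f (n + 1) * thetaSum a f n₀ (n + 1))
      - f (n + 1) * (f n * thetaSum a f n₀ n)) = 1 := by
  have hA : (aext a n : ℂ) ≠ 0 := Complex.ofReal_ne_zero.mpr (aext_pos ha n).ne'
  rw [thetaSum_add_one hn]
  field_simp
  ring

theorem tendsto_pow_mul_thetaSum {ζ : ℂ} (hζ : ζ ≠ 0) (hζ1 : ‖ζ‖ < 1)
    (ha : Tendsto (fun n ↦ (a n : ℂ)) atTop (𝓝 (1 / 2)))
    (hf : Tendsto (fun n : ℕ ↦ f n * ζ ^ (-(n : ℤ))) atTop (𝓝 1)) :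
    Tendsto (fun n : ℕ ↦ ζ ^ (2 * n) * thetaSum a f n₀ n) atTop (𝓝 (2 / (ζ⁻¹ - ζ))) := by
  have hζ2 : ‖ζ ^ 2‖ < 1 := by rw [norm_pow]; nlinarith [norm_nonneg ζ]
  have hd : Tendsto (fun n : ℕ ↦ ζ ^ (2 * (n + 1)) * ((aext a n : ℂ) * f n * f (n + 1))⁻¹)
      atTop (𝓝 (2 * ζ)) := by
    have h := (((ha.mul hf).mul (hf.comp (tendsto_add_atTop_nat 1))).inv₀
      (by norm_num)).const_mul ζ
    rw [show ζ * (1 / 2 * 1 * 1)⁻¹ = 2 * ζ by ring] at h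
    refine h.congr fun n ↦ ?_
    simp only [Function.comp_apply, aext_natCast, zpow_neg, zpow_natCast, mul_inv, inv_inv]
    push_cast
    ring
  have hlim : (1 - ζ ^ 2)⁻¹ * (2 * ζ) = 2 / (ζ⁻¹ - ζ) := by
    have h1 : 1 - ζ ^ 2 ≠ 0 := sub_ne_zero.mpr fun h ↦ by simp [← h] at hζ2
    field_simp
  rw [← hlim]
  refine tendsto_of_eventually_eq_mul_add hζ2 hd ?_
  filter_upwards [eventually_ge_atTop n₀] with n hn
  rw [Nat.cast_succ, thetaSum_add_one (by omega)]
  ring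

end thetaSum

theorem growing_solution_general
    (a b : ℕ → ℝ) (ha : ∀ n, 0 < a n)
    (htr : Summable (fun n : ℕ => |a n - 1/2| + |b n|))
    (ζ : ℂ) (hζ0 : 0 < ‖ζ‖) (hζ1 : ‖ζ‖ < 1)
    (z sq : ℂ) (hsq : sq = (ζ⁻¹ - ζ) / 2)
    (f : ℤ → ℂ) (hf : IsJacobiSol a b z f)
    (hasym : Filter.Tendsto (fun n : ℕ => f (n : ℤ) * ζ ^ (-(n : ℤ))) Filter.atTop (nhds 1))
    (n₀ : ℕ) (hfne : ∀ n : ℤ, (n₀ : ℤ) - 1 ≤ n → f n ≠ 0)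
    (g : ℤ → ℂ)
    (hg : ∀ n : ℤ, (n₀ : ℤ) - 1 ≤ n →
      g n = f n * ∑ m ∈ Finset.Icc (n₀ : ℤ) n, ((aext a (m - 1) : ℂ) * f (m - 1) * f m)⁻¹) :
    (∀ n : ℕ, n₀ ≤ n →
        (aext a ((n : ℤ) - 1) : ℂ) * g ((n : ℤ) - 1) + (b n : ℂ) * g (n : ℤ)
          + (a n : ℂ) * g ((n : ℤ) + 1) = z * g (n : ℤ)) ∧
    (∀ n : ℤ, (n₀ : ℤ) - 1 ≤ n →
        (aext a n : ℂ) * (f n * g (n + 1) - f (n + 1) * g n) = 1) ∧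
    Filter.Tendsto (fun n : ℕ => ζ ^ (n : ℕ) * g (n : ℤ)) Filter.atTop (nhds (1 / sq)) := by
  have hg' : ∀ n : ℤ, (n₀ : ℤ) - 1 ≤ n → g n = f n * thetaSum a f n₀ n := hg
  have wronskian (n : ℤ) (hn : (n₀ : ℤ) - 1 ≤ n) :
      (aext a n : ℂ) * (f n * g (n + 1) - f (n + 1) * g n) = 1 := by
    rw [hg' n hn, hg' (n + 1) (by omega)]
    exact aext_mul_wronskian_thetaSum ha hn (hfne n hn) (hfne (n + 1) (by omega))
  refine ⟨fun n hn ↦ ?_, wronskian, ?_⟩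
  · refine mul_add_mul_add_mul_eq_of_wronskian (hf n) ?_ (hfne n (by omega))
    rw [← aext_natCast a n, wronskian n (by omega)]
    simpa using wronskian (n - 1) (by omega)
  · have hζ : ζ ≠ 0 := norm_pos_iff.mp hζ0
    have ha_lim : Tendsto (fun n ↦ (a n : ℂ)) atTop (𝓝 (1 / 2)) := by
      have h : Tendsto (fun n ↦ a n - 1 / 2) atTop (𝓝 0) :=
        squeeze_zero_norm (fun n ↦ le_add_of_nonneg_right (abs_nonneg (b n)))
          htr.tendsto_atTop_zero
      simpa [Function.comp_def] using
        (Complex.continuous_ofReal.tendsto _).comp (tendsto_sub_nhds_zero_iff.mp h)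
    have hS := hasym.mul (tendsto_pow_mul_thetaSum (n₀ := n₀) hζ hζ1 ha_lim hasym)
    rw [one_mul, ← one_div_div, ← hsq] at hS
    refine hS.congr' ?_
    filter_upwards [eventually_ge_atTop n₀] with n hn
    rw [hg' n (by omega), zpow_neg, zpow_natCast]
    field_simp
    ring

/-- construction of the exponentially growing solution
`g_n = f_n Θ_n`, its Wronskian with `f` and its asymptotics. -/
theorem growing_solution
    (a b : ℕ → ℝ) (ha : ∀ n, 0 < a n)
    (htr : Summable (fun n : ℕ => |a n - 1/2| + |b n|))
    (ζ : ℂ) (hζ0 : 0 < ‖ζ‖) (hζ1 : ‖ζ‖ < 1)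
    (z sq : ℂ) (hz : z = (ζ + ζ⁻¹) / 2) (hsq : sq = (ζ⁻¹ - ζ) / 2)
    (f : ℤ → ℂ) (hf : IsJacobiSol a b z f)
    (hasym : Filter.Tendsto (fun n : ℕ => f (n : ℤ) * ζ ^ (-(n : ℤ))) Filter.atTop (nhds 1))
    (n₀ : ℕ) (hfne : ∀ n : ℤ, (n₀ : ℤ) - 1 ≤ n → f n ≠ 0)
    (g : ℤ → ℂ)
    (hg : ∀ n : ℤ, (n₀ : ℤ) - 1 ≤ n →
      g n = f n * ∑ m ∈ Finset.Icc (n₀ : ℤ) n, ((aext a (m - 1) : ℂ) * f (m - 1) * f m)⁻¹) :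
    (∀ n : ℕ, n₀ ≤ n →
        (aext a ((n : ℤ) - 1) : ℂ) * g ((n : ℤ) - 1) + (b n : ℂ) * g (n : ℤ)
          + (a n : ℂ) * g ((n : ℤ) + 1) = z * g (n : ℤ)) ∧
    (∀ n : ℤ, (n₀ : ℤ) - 1 ≤ n →
        (aext a n : ℂ) * (f n * g (n + 1) - f (n + 1) * g n) = 1) ∧
    Filter.Tendsto (fun n : ℕ => ζ ^ (n : ℕ) * g (n : ℤ)) Filter.atTop (nhds (1 / sq)) :=
  growing_solution_general a b ha htr ζ hζ0 hζ1 z sq hsq f hf hasym n₀ hfne g hg
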